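/- For any ε ∈ (0,1): (a) the map f ↦ ‖f‖_ε := ∑_{u∈ℕ×ℤ^d : f(u)>ε} f(u) is lower semicontinuous on (S, d), i.e., for every f ∈ S and δ₂ > 0 there is δ₁ > 0 such that d(f,g) < δ₁ implies ‖g‖_ε > ‖f‖_ε − δ₂; (b) the map f ↦ 𝟙{max_{u∈ℕ×ℤ^d} f(u) ≥ ε} is upper semicontinuous on (S, d), i.e., if d(f_n, f) → 0 and max_{u} f_n(u) ≥ ε for all n, then max_{u} f(u) ≥ ε. -/

import Mathlib

open Filter MeasureTheory
open scoped BigOperators Topology ENNReal Classical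

namespace DirectedPolymers

/-- The disjoint union of countably many copies of `ℤ^d`. -/
abbrev Site (d : ℕ) := ℕ × (Fin d → ℤ)

/-- `‖u - v‖₁`: the `ℓ¹` distance within a common copy of `ℤ^d`, and `∞` across copies. -/
noncomputable def dist1 {d : ℕ} (u v : Site d) : ENat :=
  if u.1 = v.1 then ((∑ i, (u.2 i - v.2 i).natAbs : ℕ) : ENat) else ⊤

/-- `u' - v' = u - v` in `ℤ^d ∪ {∞}`: either both differences are taken in the same copy
of `ℤ^d` and agree, or both are `∞`. -/
def sameDiff {d : ℕ} (u' v' u v : Site d) : Prop :=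
  (u'.1 = v'.1 ∧ u.1 = v.1 ∧ u'.2 - v'.2 = u.2 - v.2) ∨ (u'.1 ≠ v'.1 ∧ u.1 ≠ v.1)

/-- `φ` is an isometry of degree `m` on `A`:
`φ(u) - φ(v) = u - v` whenever `‖u-v‖₁ < m` or `‖φ(u)-φ(v)‖₁ < m`. -/
def IsIsoDeg {d : ℕ} (A : Set (Site d)) (φ : Site d → Site d) (m : ENat) : Prop :=
  ∀ u ∈ A, ∀ v ∈ A, (dist1 u v < m ∨ dist1 (φ u) (φ v) < m) → sameDiff (φ u) (φ v) u v

/-- `2^{-m}`, with value `0` at `m = ∞`. -/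
noncomputable def twoPowNeg (m : ENat) : ℝ :=
  if m = ⊤ then 0 else (2 : ℝ) ^ (-(m.toNat : ℤ))

/-- The quantity `d_φ(f,g)` associated to an isometry `φ` with finite domain `A` and
degree (at least) `m`. -/
noncomputable def dPhi {d : ℕ} (A : Finset (Site d)) (φ : Site d → Site d) (m : ENat)
    (f g : Site d → ℝ) : ℝ :=
  2 * ∑ u ∈ A, |f u - g (φ u)|
    + (∑' u : {u : Site d // u ∉ A}, (f u.1) ^ 2)
    + (∑' u : {u : Site d // u ∉ A.image φ}, (g u.1) ^ 2)
    + twoPowNeg m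

/-- `d(f,g)`: the infimum of `d_φ(f,g)` over all isometries `φ` with finite domain. -/
noncomputable def pdist {d : ℕ} (f g : Site d → ℝ) : ℝ :=
  sInf { r : ℝ | ∃ (A : Finset (Site d)) (φ : Site d → Site d) (m : ENat),
    1 ≤ m ∧ IsIsoDeg (A : Set (Site d)) φ m ∧ r = dPhi A φ m f g }

/-- Membership in `S`: nonnegative subprobability mass functions on `ℕ × ℤ^d`. -/
def memS {d : ℕ} (f : Site d → ℝ) : Prop :=
  (∀ u, 0 ≤ f u) ∧ Summable f ∧ (∑' u, f u) ≤ 1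


/-- `‖f‖_ε`: the total mass of `f` on sites where `f > ε`. -/
noncomputable def normEps {d : ℕ} (ε : ℝ) (f : Site d → ℝ) : ℝ :=
  ∑' u : {u : Site d // ε < f u}, f u.1


lemma memS.le_one {d : ℕ} {f : Site d → ℝ} (hf : memS f) (u : Site d) : f u ≤ 1 :=
  le_trans (Summable.le_tsum hf.2.1 u fun v _ => hf.1 v) hf.2.2

lemma memS.sq_summable {d : ℕ} {f : Site d → ℝ} (hf : memS f) :
    Summable (fun u : Site d => f u ^ 2) := by
  refine Summable.of_nonneg_of_le (fun u => sq_nonneg _) (fun u => ?_) hf.2.1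
  nlinarith [hf.1 u, hf.le_one u]

lemma injOn_of_iso {d : ℕ} {A : Finset (Site d)} {φ : Site d → Site d} {m : ENat}
    (hm : 1 ≤ m) (h : IsIsoDeg (A : Set (Site d)) φ m) :
    Set.InjOn φ (A : Set (Site d)) := by
  intro u hu v hv huv
  have h0 : dist1 (φ u) (φ v) < m := by
    have hz : dist1 (φ u) (φ v) = 0 := by simp [dist1, huv]
    rw [hz]
    exact lt_of_lt_of_le (by norm_num) hm
  rcases h u hu v hv (Or.inr h0) with ⟨h1, h2, h3⟩ | ⟨h1, _⟩
  · rw [huv] at h3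
    have h4 : u.2 - v.2 = 0 := by rw [← h3]; simp
    exact Prod.ext h2 (sub_eq_zero.mp h4)
  · exact absurd (by rw [huv]) h1

lemma exists_iso {d : ℕ} {f g : Site d → ℝ} {δ : ℝ} (h : pdist f g < δ) :
    ∃ (A : Finset (Site d)) (φ : Site d → Site d) (m : ENat),
      1 ≤ m ∧ IsIsoDeg (A : Set (Site d)) φ m ∧ dPhi A φ m f g < δ := by
  have hne : { r : ℝ | ∃ (A : Finset (Site d)) (φ : Site d → Site d) (m : ENat),
      1 ≤ m ∧ IsIsoDeg (A : Set (Site d)) φ m ∧ r = dPhi A φ m f g }.Nonempty :=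
    ⟨dPhi ∅ id 1 f g, ∅, id, 1, le_refl _, by intro u hu; simp at hu, rfl⟩
  obtain ⟨r, ⟨A, φ, m, hm, hiso, rfl⟩, hr⟩ := exists_lt_of_csInf_lt hne h
  exact ⟨A, φ, m, hm, hiso, hr⟩

lemma twoPowNeg_nonneg (m : ENat) : 0 ≤ twoPowNeg m := by
  unfold twoPowNeg; split <;> positivity

lemma dPhi_bounds {d : ℕ} {f g : Site d → ℝ} (hf : memS f) {A : Finset (Site d)}
    {φ : Site d → Site d} {m : ENat} {δ : ℝ} (h : dPhi A φ m f g < δ) :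
    (∑ u ∈ A, |f u - g (φ u)|) < δ / 2 ∧ ∀ u ∉ A, f u ^ 2 < δ := by
  have h2 : (0:ℝ) ≤ ∑' u : {u : Site d // u ∉ A}, (f u.1) ^ 2 :=
    tsum_nonneg fun u => sq_nonneg _
  have h3 : (0:ℝ) ≤ ∑' u : {u : Site d // u ∉ A.image φ}, (g u.1) ^ 2 :=
    tsum_nonneg fun u => sq_nonneg _
  have h4 := twoPowNeg_nonneg m
  have h1 : (0:ℝ) ≤ ∑ u ∈ A, |f u - g (φ u)| :=
    Finset.sum_nonneg fun u _ => abs_nonneg _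
  unfold dPhi at h
  constructor
  · linarith
  · intro u hu
    have hle : f u ^ 2 ≤ ∑' u : {u : Site d // u ∉ A}, (f u.1) ^ 2 :=
      Summable.le_tsum (hf.sq_summable.subtype _) ⟨u, hu⟩ fun v _ => sq_nonneg _
    linarith


/-- For `ε ∈ (0,1)`: (a) `f ↦ ‖f‖_ε` is lower semicontinuous on `(S,d)`;
(b) `f ↦ 𝟙{max_u f(u) ≥ ε}` is upper semicontinuous on `(S,d)`. -/
theorem normEps_lsc_and_indicator_usc {d : ℕ} (hd : 1 ≤ d)
    (ε : ℝ) (hε : ε ∈ Set.Ioo (0 : ℝ) 1) :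
    (∀ f : Site d → ℝ, memS f → ∀ δ₂ > (0 : ℝ), ∃ δ₁ > (0 : ℝ),
      ∀ g : Site d → ℝ, memS g → pdist f g < δ₁ → normEps ε f - δ₂ < normEps ε g) ∧
    (∀ (fseq : ℕ → Site d → ℝ) (f : Site d → ℝ), (∀ n, memS (fseq n)) → memS f →
      Tendsto (fun n => pdist (fseq n) f) atTop (nhds 0) →
      (∀ n, ε ≤ ⨆ u, fseq n u) → ε ≤ ⨆ u, f u) := by
  obtain ⟨hε0, hε1⟩ := hε
  constructor
  · -- part (a)
    intro f hf δ₂ hδ₂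
    -- approximating finset
    have hsub : Summable (fun u : {u : Site d // ε < f u} => f u.1) := hf.2.1.subtype _
    have hhs : HasSum (fun u : {u : Site d // ε < f u} => f u.1) (normEps ε f) :=
      hsub.hasSum
    have hev : ∀ᶠ t in (atTop : Filter (Finset {u : Site d // ε < f u})),
        normEps ε f - δ₂ / 2 < ∑ u ∈ t, f u.1 :=
      hhs.eventually (Ioi_mem_nhds (by linarith))
    obtain ⟨t, ht⟩ := hev.exists
    set F : Finset (Site d) := t.image Subtype.val with hFdef
    have hFf : ∀ u ∈ F, ε < f u := by
      intro u hu
      obtain ⟨⟨v, hv⟩, -, rfl⟩ := Finset.mem_image.mp hu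
      exact hv
    have hFsum : ∑ u ∈ F, f u = ∑ u ∈ t, f u.1 :=
      Finset.sum_image (fun x _ y _ h => Subtype.val_injective h)
    rcases F.eq_empty_or_nonempty with hFe | hFne
    · -- empty case
      refine ⟨1, one_pos, fun g hg _ => ?_⟩
      have h0 : normEps ε f - δ₂ / 2 < 0 := by
        rw [← hFsum, hFe] at ht; simpa using ht
      have hg0 : (0:ℝ) ≤ normEps ε g := tsum_nonneg fun u => hg.1 u.1
      linarith
    · set η : ℝ := F.inf' hFne (fun u => f u - ε) with hηdef
      have hη : 0 < η := by
        rw [hηdef, Finset.lt_inf'_iff]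
        intro u hu; linarith [hFf u hu]
      refine ⟨min (min η (ε ^ 2)) δ₂, by positivity, fun g hg hpd => ?_⟩
      set δ₁ : ℝ := min (min η (ε ^ 2)) δ₂ with hδ₁def
      have hδ₁η : δ₁ ≤ η := le_trans (min_le_left _ _) (min_le_left _ _)
      have hδ₁ε : δ₁ ≤ ε ^ 2 := le_trans (min_le_left _ _) (min_le_right _ _)
      have hδ₁δ₂ : δ₁ ≤ δ₂ := min_le_right _ _
      obtain ⟨A, φ, m, hm, hiso, hdP⟩ := exists_iso hpd
      obtain ⟨hS1, hS2⟩ := dPhi_bounds hf hdP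
      -- F ⊆ A
      have hFA : F ⊆ A := by
        intro u hu
        by_contra hunA
        have h1 := hS2 u hunA
        have h2 := hFf u hu
        nlinarith
      -- termwise bounds on F
      have hterm : ∀ u ∈ F, |f u - g (φ u)| < δ₁ / 2 := by
        intro u hu
        exact lt_of_le_of_lt
          (Finset.single_le_sum (f := fun v => |f v - g (φ v)|)
            (fun v _ => abs_nonneg _) (hFA hu)) hS1
      have hgφ : ∀ u ∈ F, ε < g (φ u) := by
        intro u hu
        have h1 := hterm u hu
        have h2 : f u - g (φ u) < δ₁ / 2 := lt_of_le_of_lt (le_abs_self _) h1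
        have h3 : η ≤ f u - ε := Finset.inf'_le _ hu
        linarith
      -- sums
      have hinj : ∀ x ∈ F, ∀ y ∈ F, φ x = φ y → x = y := fun x hx y hy h =>
        injOn_of_iso hm hiso (hFA hx) (hFA hy) h
      have hsum1 : ∑ v ∈ F.image φ, g v = ∑ u ∈ F, g (φ u) := Finset.sum_image hinj
      have hsum2 : ∑ v ∈ F.image φ, g v ≤ normEps ε g := by
        have hind : normEps ε g = ∑' u, Set.indicator {u : Site d | ε < g u} g u :=
          tsum_subtype _ g
        rw [hind]
        calc ∑ v ∈ F.image φ, g v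
            = ∑ v ∈ F.image φ, Set.indicator {u : Site d | ε < g u} g v := by
              refine Finset.sum_congr rfl fun v hv => ?_
              obtain ⟨u, hu, rfl⟩ := Finset.mem_image.mp hv
              exact (Set.indicator_of_mem (show φ u ∈ {u : Site d | ε < g u} from hgφ u hu) g).symm
          _ ≤ ∑' u, Set.indicator {u : Site d | ε < g u} g u :=
              Summable.sum_le_tsum _ (fun v _ => Set.indicator_nonneg (fun u _ => hg.1 u) v)
                (hg.2.1.indicator _)
      -- lower bound on ∑_F g∘φ
      have hFabs : ∑ u ∈ F, |f u - g (φ u)| ≤ ∑ u ∈ A, |f u - g (φ u)| :=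
        Finset.sum_le_sum_of_subset_of_nonneg hFA fun v _ _ => abs_nonneg _
      have hlow : ∑ u ∈ F, f u - δ₁ / 2 < ∑ u ∈ F, g (φ u) := by
        have hpt : ∀ u ∈ F, f u - |f u - g (φ u)| ≤ g (φ u) := fun u _ => by
          have := le_abs_self (f u - g (φ u)); linarith
        have h1 : ∑ u ∈ F, (f u - |f u - g (φ u)|) ≤ ∑ u ∈ F, g (φ u) :=
          Finset.sum_le_sum hpt
        rw [Finset.sum_sub_distrib] at h1
        linarith
      have hFbig : normEps ε f - δ₂ / 2 < ∑ u ∈ F, f u := by rw [hFsum]; exact ht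
      linarith [hsum2, hsum1 ▸ hsum2]
  · -- part (b)
    intro fseq f hfseq hf htend hsup
    by_contra hlt
    push_neg at hlt
    set s : ℝ := ⨆ u, f u with hsdef
    have hbdd : BddAbove (Set.range f) := ⟨1, by rintro x ⟨u, rfl⟩; exact hf.le_one u⟩
    have hs0 : 0 ≤ s := le_trans (hf.1 default) (le_ciSup hbdd default)
    set c : ℝ := (ε + s) / 2 with hcdef
    have hsc : s < c := by simp only [hcdef]; linarith
    have hcε : c < ε := by simp only [hcdef]; linarith
    have hc0 : 0 < c := by simp only [hcdef]; linarith
    set δ : ℝ := min (c - s) (c ^ 2) with hδdef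
    have hδ0 : 0 < δ := lt_min (by linarith) (by positivity)
    obtain ⟨n, hn⟩ := (htend.eventually (Iio_mem_nhds hδ0)).exists
    have hn' : pdist (fseq n) f < δ := hn
    obtain ⟨A, φ, m, hm, hiso, hdP⟩ := exists_iso hn'
    obtain ⟨hS1, hS2⟩ := dPhi_bounds (hfseq n) hdP
    -- find u with fseq n u > c
    have hu : ∃ u, c < fseq n u := by
      by_contra hcon
      push_neg at hcon
      have : (⨆ u, fseq n u) ≤ c := ciSup_le hcon
      linarith [hsup n]
    obtain ⟨u, hu⟩ := hu
    by_cases huA : u ∈ A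
    · have hterm : |fseq n u - f (φ u)| < δ / 2 :=
        lt_of_le_of_lt (Finset.single_le_sum (f := fun v => |fseq n v - f (φ v)|)
          (fun v _ => abs_nonneg _) huA) hS1
      have h2 : fseq n u - f (φ u) < δ / 2 := lt_of_le_of_lt (le_abs_self _) hterm
      have h3 : f (φ u) ≤ s := le_ciSup hbdd (φ u)
      have h4 : δ ≤ c - s := min_le_left _ _
      linarith
    · have h1 := hS2 u huA
      have h2 : δ ≤ c ^ 2 := min_le_right _ _
      nlinarith

end DirectedPolymers
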